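/- Let data points (x^ℓ, y_ℓ) ∈ ℝ^d × ℝ, ℓ = 1,…,N, be given, let k₁, k₂ ≥ 1, and for Θ = ((aⁱ, αᵢ)_{i=1}^{k₁}, (bʲ, βⱼ)_{j=1}^{k₂}) ∈ ℝ^{(k₁+k₂)(d+1)} define f(Θ) = (1/(2N)) Σ_{ℓ=1}^{N} ( y_ℓ − [ max_{1≤i≤k₁}((aⁱ)ᵀx^ℓ + αᵢ) − max_{1≤j≤k₂}((bʲ)ᵀx^ℓ + βⱼ) ] )². Then for any polyhedral set X ⊆ ℝ^{(k₁+k₂)(d+1)}, every d-stationary point of f on X is a local minimizer of f on X. -/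

import Mathlib

/- Each residual of the objective is a difference of two maxima of affine functions of `Θ`.
Near `Θ₀` only the pieces active at `Θ₀` can attain a max, and along a short segment
`Θ₀ + δ • v`, `δ ∈ [0, 1]`, the max is attained by one fixed active piece, so it is affine in `δ`.
Hence `δ ↦ f (Θ₀ + δ • v)` is a convex quadratic on `[0, 1]` whose slope at `0` is the directional
derivative `f'(Θ₀; v) ≥ 0`, which gives `f Θ₀ ≤ f (Θ₀ + v)`. -/

open Matrix Filter

noncomputable def finMax {k : ℕ} (hk : 0 < k) (g : Fin k → ℝ) : ℝ :=
  Finset.univ.sup' (Finset.univ_nonempty_iff.mpr ⟨⟨0, hk⟩⟩) g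

/-- The parameter space `Θ = ((aⁱ, αᵢ)_{i=1}^{k₁}, (bʲ, βⱼ)_{j=1}^{k₂})`, a copy of
`ℝ^{(k₁+k₂)(d+1)}`. -/
abbrev RegSpace (d k₁ k₂ : ℕ) := (Fin k₁ → (Fin d → ℝ) × ℝ) × (Fin k₂ → (Fin d → ℝ) × ℝ)

/-- The least-squares piecewise affine regression objective
`f(Θ) = (1/(2N)) Σ_ℓ (y_ℓ − [maxᵢ((aⁱ)ᵀxℓ + αᵢ) − maxⱼ((bʲ)ᵀxℓ + βⱼ)])²`. -/
noncomputable def regObj {d N k₁ k₂ : ℕ} (hk₁ : 0 < k₁) (hk₂ : 0 < k₂)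
    (x : Fin N → Fin d → ℝ) (y : Fin N → ℝ) (Θ : RegSpace d k₁ k₂) : ℝ :=
  (1 / (2 * (N : ℝ))) * ∑ ℓ : Fin N, (y ℓ -
      (finMax hk₁ (fun i => (Θ.1 i).1 ⬝ᵥ x ℓ + (Θ.1 i).2) -
       finMax hk₂ (fun j => (Θ.2 j).1 ⬝ᵥ x ℓ + (Θ.2 j).2))) ^ 2

/-- A polyhedral subset of a real normed space: the solution set of finitely many
continuous linear inequalities. -/
def IsPolyhedralE {E : Type*} [NormedAddCommGroup E] [NormedSpace ℝ E] (X : Set E) : Prop :=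
  ∃ (m : ℕ) (L : Fin m → E →L[ℝ] ℝ) (b : Fin m → ℝ), X = {θ | ∀ i, L i θ ≤ b i}

/-- The one-sided directional derivative of `f` at `x` in direction `v` equals `L`. -/
def HasDirDerivE {E : Type*} [NormedAddCommGroup E] [NormedSpace ℝ E]
    (f : E → ℝ) (x v : E) (L : ℝ) : Prop :=
  Filter.Tendsto (fun δ : ℝ => (f (x + δ • v) - f x) / δ) (nhdsWithin 0 (Set.Ioi 0)) (nhds L)

/-- `x₀` is a d(irectional)-stationary point of `f` on `X`. -/
def DStatE {E : Type*} [NormedAddCommGroup E] [NormedSpace ℝ E]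
    (f : E → ℝ) (X : Set E) (x₀ : E) : Prop :=
  x₀ ∈ X ∧ ∀ x ∈ X, ∃ L, HasDirDerivE f x₀ (x - x₀) L ∧ 0 ≤ L

open Set Topology

lemma exists_pos_forall_add_le_of_lt {ι : Type*} [Finite ι] (u v : ι → ℝ) :
    ∃ γ > 0, ∀ i, u i < v i → u i + γ ≤ v i := by
  have h : ∀ᶠ γ in 𝓝[>] (0 : ℝ), ∀ i, u i < v i → u i + γ ≤ v i := by
    refine eventually_all.2 fun i => ?_
    by_cases hi : u i < v i
    · filter_upwards [Ioo_mem_nhdsGT (sub_pos.2 hi)] with γ hγ _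
      linarith [hγ.2]
    · exact Eventually.of_forall fun _ h => absurd h hi
  obtain ⟨γ, hγ, hpos⟩ := (h.and self_mem_nhdsWithin).exists
  exact ⟨γ, hpos, hγ⟩

section finMax

variable {k : ℕ} (hk : 0 < k)

lemma le_finMax (g : Fin k → ℝ) (i : Fin k) : g i ≤ finMax hk g :=
  Finset.le_sup' g (Finset.mem_univ i)

lemma finMax_le {g : Fin k → ℝ} {a : ℝ} (h : ∀ i, g i ≤ a) : finMax hk g ≤ a :=
  Finset.sup'_le _ _ fun i _ => h i

lemma exists_eq_finMax (g : Fin k → ℝ) : ∃ i, g i = finMax hk g := by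
  obtain ⟨i, -, hi⟩ := Finset.exists_mem_eq_sup' (Finset.univ_nonempty_iff.mpr ⟨⟨0, hk⟩⟩) g
  exact ⟨i, hi.symm⟩

/-- `S` is the largest slope `w i` among the pieces active at `δ = 0`; the gap `2 * c` keeps the
inactive pieces below the maximum for all `δ ∈ [0, 1]`. -/
lemma finMax_add_smul_eq_of_gap (u w : Fin k → ℝ) {c : ℝ} (hw : ∀ i, |w i| ≤ c)
    (hgap : ∀ i, u i < finMax hk u → u i + 2 * c ≤ finMax hk u) :
    ∃ S, ∀ δ ∈ Icc (0 : ℝ) 1, finMax hk (u + δ • w) = finMax hk u + δ * S := by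
  classical
  set M := finMax hk u
  obtain ⟨i₀, hi₀⟩ := exists_eq_finMax hk u
  obtain ⟨i₁, hi₁, hmax⟩ := Finset.exists_max_image (Finset.univ.filter fun i => u i = M) w
    ⟨i₀, by simpa using hi₀⟩
  replace hi₁ : u i₁ = M := (Finset.mem_filter.1 hi₁).2
  refine ⟨w i₁, fun δ ⟨hδ0, hδ1⟩ => le_antisymm (finMax_le hk fun i => ?_) ?_⟩
  · simp only [Pi.add_apply, Pi.smul_apply, smul_eq_mul]
    rcases (le_finMax hk u i).eq_or_lt with hact | hlt
    · have := mul_le_mul_of_nonneg_left (hmax i (by simpa using hact)) hδ0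
      linarith
    · have hwi := (abs_le.1 (hw i)).2
      have hwi₁ := (abs_le.1 (hw i₁)).1
      have hc : 0 ≤ c := (abs_nonneg _).trans (hw i)
      have : δ * w i ≤ c := by nlinarith [mul_le_mul_of_nonneg_left hwi hδ0]
      have : -c ≤ δ * w i₁ := by nlinarith [mul_le_mul_of_nonneg_left hwi₁ hδ0]
      linarith [hgap i hlt]
  · simpa [hi₁] using le_finMax hk (u + δ • w) i₁

lemma eventually_finMax_add_smul_eq {α : Type*} {l : Filter α} (u : Fin k → ℝ)
    {w : α → Fin k → ℝ} (hw : Tendsto w l (𝓝 0)) :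
    ∀ᶠ a in l, ∃ S, ∀ δ ∈ Icc (0 : ℝ) 1, finMax hk (u + δ • w a) = finMax hk u + δ * S := by
  obtain ⟨γ, hγ, hgap⟩ := exists_pos_forall_add_le_of_lt u fun _ => finMax hk u
  have hsmall : ∀ᶠ a in l, ∀ i, |w a i| ≤ γ / 2 := by
    refine eventually_all.2 fun i => ?_
    have hlim := ((continuous_apply i).tendsto _).comp hw
    have h0 : |(0 : Fin k → ℝ) i| < γ / 2 := by simpa using half_pos hγ
    exact hlim.abs.eventually (ge_mem_nhds h0)
  filter_upwards [hsmall] with a ha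
  exact finMax_add_smul_eq_of_gap hk u (w a) ha fun i hi => by linarith [hgap i hi]

end finMax

lemma HasDirDerivE.le_apply_add_of_quadratic {E : Type*} [NormedAddCommGroup E] [NormedSpace ℝ E]
    {f : E → ℝ} {x v : E} {B C L : ℝ}
    (hquad : ∀ δ ∈ Icc (0 : ℝ) 1, f (x + δ • v) = f x + B * δ + C * δ ^ 2) (hC : 0 ≤ C)
    (hL : HasDirDerivE f x v L) (hL0 : 0 ≤ L) : f x ≤ f (x + v) := by
  have hB : Tendsto (fun δ : ℝ => (f (x + δ • v) - f x) / δ) (𝓝[>] 0) (𝓝 B) := by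
    have hlin : Tendsto (fun δ : ℝ => B + C * δ) (𝓝[>] 0) (𝓝 B) := by
      simpa using tendsto_nhdsWithin_of_tendsto_nhds
        ((tendsto_id (x := 𝓝 (0 : ℝ))).const_mul C |>.const_add B)
    refine hlin.congr' ?_
    filter_upwards [Ioo_mem_nhdsGT (zero_lt_one' ℝ)] with δ hδ
    rw [hquad δ (Ioo_subset_Icc_self hδ)]
    field_simp [hδ.1.ne']
    ring
  have h1 := hquad 1 (right_mem_Icc.2 zero_le_one)
  simp only [one_smul, mul_one, one_pow] at h1
  linarith [tendsto_nhds_unique hB hL]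

def affineEval {d k : ℕ} (p : Fin k → (Fin d → ℝ) × ℝ) (z : Fin d → ℝ) : Fin k → ℝ :=
  fun i => (p i).1 ⬝ᵥ z + (p i).2

lemma affineEval_add_smul {d k : ℕ} (p q : Fin k → (Fin d → ℝ) × ℝ) (δ : ℝ) (z : Fin d → ℝ) :
    affineEval (p + δ • q) z = affineEval p z + δ • affineEval q z := by
  ext i
  simp only [affineEval, Pi.add_apply, Pi.smul_apply, Prod.fst_add, Prod.snd_add, Prod.smul_fst,
    Prod.smul_snd, add_dotProduct, smul_dotProduct, smul_eq_mul]
  ring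

lemma tendsto_affineEval_zero {d k : ℕ} (z : Fin d → ℝ) :
    Tendsto (fun p : Fin k → (Fin d → ℝ) × ℝ => affineEval p z) (𝓝 0) (𝓝 0) := by
  have hcont : Continuous fun p : Fin k → (Fin d → ℝ) × ℝ => affineEval p z :=
    continuous_pi fun i => (((continuous_apply i).fst).dotProduct continuous_const).add
      (continuous_apply i).snd
  convert hcont.tendsto 0
  ext
  simp [affineEval]

lemma sum_sub_mul_sq_eq {ι : Type*} (s : Finset ι) (c δ : ℝ) (r t : ι → ℝ) :
    c * ∑ i ∈ s, (r i - δ * t i) ^ 2 =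
      c * ∑ i ∈ s, r i ^ 2 + (c * ∑ i ∈ s, -2 * r i * t i) * δ + (c * ∑ i ∈ s, t i ^ 2) * δ ^ 2 := by
  simp only [Finset.mul_sum, ← Finset.sum_add_distrib, Finset.sum_mul]
  exact Finset.sum_congr rfl fun _ _ => by ring

lemma eventually_regObj_add_smul_quadratic {d N k₁ k₂ : ℕ} (hk₁ : 0 < k₁) (hk₂ : 0 < k₂)
    (x : Fin N → Fin d → ℝ) (y : Fin N → ℝ) (Θ₀ : RegSpace d k₁ k₂) :
    ∀ᶠ v in 𝓝 (0 : RegSpace d k₁ k₂), ∃ B C, 0 ≤ C ∧ ∀ δ ∈ Icc (0 : ℝ) 1,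
      regObj hk₁ hk₂ x y (Θ₀ + δ • v) = regObj hk₁ hk₂ x y Θ₀ + B * δ + C * δ ^ 2 := by
  have h₁ := eventually_all.2 fun ℓ => eventually_finMax_add_smul_eq hk₁ (affineEval Θ₀.1 (x ℓ))
    (w := fun v : RegSpace d k₁ k₂ => affineEval v.1 (x ℓ))
    ((tendsto_affineEval_zero (x ℓ)).comp (continuous_fst.tendsto' _ _ Prod.fst_zero))
  have h₂ := eventually_all.2 fun ℓ => eventually_finMax_add_smul_eq hk₂ (affineEval Θ₀.2 (x ℓ))
    (w := fun v : RegSpace d k₁ k₂ => affineEval v.2 (x ℓ))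
    ((tendsto_affineEval_zero (x ℓ)).comp (continuous_snd.tendsto' _ _ Prod.snd_zero))
  filter_upwards [h₁, h₂] with v hv₁ hv₂
  choose S₁ hS₁ using hv₁
  choose S₂ hS₂ using hv₂
  set r := fun ℓ => y ℓ - (finMax hk₁ (affineEval Θ₀.1 (x ℓ)) - finMax hk₂ (affineEval Θ₀.2 (x ℓ)))
  set t := fun ℓ => S₁ ℓ - S₂ ℓ
  refine ⟨1 / (2 * N) * ∑ ℓ, -2 * r ℓ * t ℓ, 1 / (2 * N) * ∑ ℓ, t ℓ ^ 2, by positivity,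
    fun δ hδ => ?_⟩
  have hsum : regObj hk₁ hk₂ x y (Θ₀ + δ • v) = 1 / (2 * N) * ∑ ℓ, (r ℓ - δ * t ℓ) ^ 2 := by
    change 1 / (2 * (N : ℝ)) * ∑ ℓ, (y ℓ - (finMax hk₁ (affineEval (Θ₀.1 + δ • v.1) (x ℓ)) -
      finMax hk₂ (affineEval (Θ₀.2 + δ • v.2) (x ℓ)))) ^ 2 = _
    congr 1
    refine Finset.sum_congr rfl fun ℓ _ => ?_
    rw [affineEval_add_smul, affineEval_add_smul, hS₁ ℓ δ hδ, hS₂ ℓ δ hδ]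
    ring
  rw [hsum, sum_sub_mul_sq_eq]
  rfl

theorem stmt_19_general {d N k₁ k₂ : ℕ} (hk₁ : 0 < k₁) (hk₂ : 0 < k₂)
    (x : Fin N → Fin d → ℝ) (y : Fin N → ℝ)
    (X : Set (RegSpace d k₁ k₂))
    (Θ₀ : RegSpace d k₁ k₂) (hstat : DStatE (regObj hk₁ hk₂ x y) X Θ₀) :
    ∃ ε > 0, ∀ Θ ∈ X, ‖Θ - Θ₀‖ < ε →
      regObj hk₁ hk₂ x y Θ₀ ≤ regObj hk₁ hk₂ x y Θ := by
  obtain ⟨ε, hε, hquad⟩ :=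
    Metric.eventually_nhds_iff.1 (eventually_regObj_add_smul_quadratic hk₁ hk₂ x y Θ₀)
  refine ⟨ε, hε, fun Θ hΘ hnear => ?_⟩
  obtain ⟨B, C, hC, hBC⟩ := hquad (by rwa [dist_zero_right])
  obtain ⟨L, hL, hL0⟩ := hstat.2 Θ hΘ
  simpa only [add_sub_cancel] using hL.le_apply_add_of_quadratic hBC hC hL0

/-- Proposition 16(c): every d-stationary point of the least-squares piecewise affine
regression objective on a polyhedral set `X` is a local minimizer on `X`. -/
theorem stmt_19 {d N k₁ k₂ : ℕ} (hN : 0 < N) (hk₁ : 0 < k₁) (hk₂ : 0 < k₂)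
    (x : Fin N → Fin d → ℝ) (y : Fin N → ℝ)
    (X : Set (RegSpace d k₁ k₂)) (hX : IsPolyhedralE X)
    (Θ₀ : RegSpace d k₁ k₂) (hstat : DStatE (regObj hk₁ hk₂ x y) X Θ₀) :
    ∃ ε > 0, ∀ Θ ∈ X, ‖Θ - Θ₀‖ < ε →
      regObj hk₁ hk₂ x y Θ₀ ≤ regObj hk₁ hk₂ x y Θ :=
  stmt_19_general hk₁ hk₂ x y X Θ₀ hstat
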